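/- arXiv:2103.12754 — 5 statements merged into one kernel-verified Lean document; each statement's English description precedes it below -/
import Mathlib

section
/- Let A be a diagonalizable endomorphism of ℝ^N all of whose eigenvalues lie in (-∞,0) ∪ (1/2,∞), and let x : (0,a] → ℂ^N be differentiable with |s^{1/2} x(s)| bounded, satisfying x'(s) + (1/s) A x(s) + E(s) = 0 where s ↦ |s E(s)| is continuous and bounded on (0,a]. Then |x(s)| is bounded on (0,a]. -/
/-!
Diagonalising `A` decouples the system into scalar Euler equations `y' + (d / s) y + F = 0`.
The integrating factor `s ^ d` turns such an equation into `(s ^ d y)' = -s ^ d F`, and the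
bound `s ‖F s‖ ≤ C` yields `‖t ^ d y t - s ^ d y s‖ ≤ C (t ^ d - s ^ d) / d`. For `d < 0` this
is compared with the value at `t = a`. For `d > 1/2` the bound on `√s ‖y s‖` forces
`s ^ d y s → 0` as `s → 0`, so letting the lower endpoint tend to `0` gives `‖y s‖ ≤ C / d`.
-/

open Set Filter Topology Matrix

theorem tendsto_rpow_nhdsGT_zero_of_pos {p : ℝ} (hp : 0 < p) :
    Tendsto (fun t : ℝ => t ^ p) (𝓝[>] 0) (𝓝 0) := by
  simpa [Real.zero_rpow hp.ne'] using
    (Real.continuousAt_rpow_const 0 p (Or.inr hp.le)).tendsto.mono_left nhdsWithin_le_nhds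

section Euler

variable {E : Type*} [NormedAddCommGroup E] [NormedSpace ℝ E]

theorem HasDerivAt.rpow_smul_of_euler {d u : ℝ} (hu : 0 < u) {y : ℝ → E} {F : E}
    (hy : HasDerivAt y (-(d / u) • y u - F) u) :
    HasDerivAt (fun v => v ^ d • y v) (-(u ^ d • F)) u := by
  convert (Real.hasDerivAt_rpow_const (p := d) (Or.inl hu.ne')).fun_smul hy using 1
  rw [Real.rpow_sub_one hu.ne', smul_sub, smul_smul]
  module

theorem norm_rpow_smul_sub_le_of_euler {d C s t : ℝ} (hd : d ≠ 0) (hs : 0 < s) (hst : s ≤ t)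
    {y F : ℝ → E} (hy : ∀ u ∈ Icc s t, HasDerivAt y (-(d / u) • y u - F u) u)
    (hF : ∀ u ∈ Icc s t, u * ‖F u‖ ≤ C) :
    ‖t ^ d • y t - s ^ d • y s‖ ≤ C * ((t ^ d - s ^ d) / d) := by
  have hg : ∀ u ∈ Icc s t,
      HasDerivAt (fun v => v ^ d • y v - s ^ d • y s) (-(u ^ d • F u)) u :=
    fun u hu => ((hy u hu).rpow_smul_of_euler (hs.trans_le hu.1)).sub_const _
  have hB : ∀ u ∈ Icc s t,
      HasDerivAt (fun v => C * ((v ^ d - s ^ d) / d)) (C * u ^ (d - 1)) u := by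
    intro u hu
    refine ((((Real.hasDerivAt_rpow_const (Or.inl (hs.trans_le hu.1).ne')).sub_const
      (s ^ d)).div_const d).const_mul C).congr_deriv ?_
    field_simp
  refine image_norm_le_of_norm_deriv_right_le_deriv_boundary'
    (fun u hu => (hg u hu).continuousAt.continuousWithinAt)
    (fun u hu => (hg u (Ico_subset_Icc_self hu)).hasDerivWithinAt) (by simp)
    (fun u hu => (hB u hu).continuousAt.continuousWithinAt)
    (fun u hu => (hB u (Ico_subset_Icc_self hu)).hasDerivWithinAt) (fun u hu' => ?_)
    (right_mem_Icc.2 hst)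
  have hu : 0 < u := hs.trans_le hu'.1
  calc ‖-(u ^ d • F u)‖ = u ^ (d - 1) * (u * ‖F u‖) := by
        rw [norm_neg, norm_smul, Real.norm_of_nonneg (by positivity), Real.rpow_sub_one hu.ne']
        field_simp
    _ ≤ u ^ (d - 1) * C := by gcongr; exact hF u (Ico_subset_Icc_self hu')
    _ = C * u ^ (d - 1) := mul_comm _ _

theorem exists_norm_le_of_euler_of_neg {d a C : ℝ} (hd : d < 0) {y F : ℝ → E}
    (hy : ∀ s ∈ Ioc 0 a, HasDerivAt y (-(d / s) • y s - F s) s)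
    (hF : ∀ s ∈ Ioc 0 a, s * ‖F s‖ ≤ C) :
    ∃ M, ∀ s ∈ Ioc 0 a, ‖y s‖ ≤ M := by
  refine ⟨a ^ (-d) * ‖a ^ d • y a‖ + C / -d, fun s hs => ?_⟩
  have hs0 : 0 < s := hs.1
  have hsub : Icc s a ⊆ Ioc 0 a := fun u hu => ⟨hs0.trans_le hu.1, hu.2⟩
  have key := norm_rpow_smul_sub_le_of_euler hd.ne hs0 hs.2 (fun u hu => hy u (hsub hu))
    (fun u hu => hF u (hsub hu))
  have hC : 0 ≤ C := (by positivity : 0 ≤ s * ‖F s‖).trans (hF s hs)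
  have hgs : ‖s ^ d • y s‖ ≤ ‖a ^ d • y a‖ + C * (s ^ d / -d) := by
    have : C * ((a ^ d - s ^ d) / d) ≤ C * (s ^ d / -d) := by
      rw [show (a ^ d - s ^ d) / d = (s ^ d - a ^ d) / -d by ring]
      have : 0 < a ^ d := Real.rpow_pos_of_pos (hs0.trans_le hs.2) d
      gcongr <;> linarith
    linarith [norm_le_norm_add_norm_sub (a ^ d • y a) (s ^ d • y s)]
  calc ‖y s‖ = s ^ (-d) * ‖s ^ d • y s‖ := by
        rw [norm_smul, Real.norm_of_nonneg (by positivity), ← mul_assoc, ← Real.rpow_add hs0,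
          neg_add_cancel, Real.rpow_zero, one_mul]
    _ ≤ s ^ (-d) * (‖a ^ d • y a‖ + C * (s ^ d / -d)) := by gcongr
    _ = s ^ (-d) * ‖a ^ d • y a‖ + C / -d := by
        rw [mul_add, Real.rpow_neg hs0.le]; field_simp
    _ ≤ a ^ (-d) * ‖a ^ d • y a‖ + C / -d := by
        gcongr <;> linarith [hs.2]

theorem tendsto_rpow_smul_nhdsGT_zero {d a K : ℝ} (hd : 1 / 2 < d) (ha : 0 < a) {y : ℝ → E}
    (hy : ∀ s ∈ Ioc 0 a, √s * ‖y s‖ ≤ K) :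
    Tendsto (fun t => t ^ d • y t) (𝓝[>] 0) (𝓝 0) := by
  have hlim := (tendsto_rpow_nhdsGT_zero_of_pos (p := d - 1 / 2) (by linarith)).const_mul K
  rw [mul_zero] at hlim
  refine squeeze_zero_norm' ?_ hlim
  filter_upwards [Ioc_mem_nhdsGT ha] with t ht
  calc ‖t ^ d • y t‖ = t ^ (d - 1 / 2) * (√t * ‖y t‖) := by
        rw [norm_smul, Real.norm_of_nonneg (Real.rpow_nonneg ht.1.le d), Real.sqrt_eq_rpow,
          ← mul_assoc, ← Real.rpow_add ht.1]
        ring_nf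
    _ ≤ t ^ (d - 1 / 2) * K := mul_le_mul_of_nonneg_left (hy t ht) (Real.rpow_nonneg ht.1.le _)
    _ = K * t ^ (d - 1 / 2) := mul_comm _ _

theorem norm_le_of_euler_of_half_lt {d a C K : ℝ} (hd : 1 / 2 < d) {y F : ℝ → E}
    (hy : ∀ s ∈ Ioc 0 a, HasDerivAt y (-(d / s) • y s - F s) s)
    (hyb : ∀ s ∈ Ioc 0 a, √s * ‖y s‖ ≤ K)
    (hF : ∀ s ∈ Ioc 0 a, s * ‖F s‖ ≤ C) :
    ∀ s ∈ Ioc 0 a, ‖y s‖ ≤ C / d := by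
  intro s hs
  have hs0 : 0 < s := hs.1
  have hd0 : 0 < d := by linarith
  have key : ‖s ^ d • y s‖ ≤ C * (s ^ d / d) := by
    have hlim := tendsto_rpow_smul_nhdsGT_zero hd (hs0.trans_le hs.2) hyb
    have hpow := tendsto_rpow_nhdsGT_zero_of_pos hd0
    refine le_of_tendsto_of_tendsto (by simpa using (tendsto_const_nhds.sub hlim).norm)
      (by simpa using ((tendsto_const_nhds.sub hpow).div_const d).const_mul C) ?_
    filter_upwards [Ioc_mem_nhdsGT hs0] with t ht
    have hsub : Icc t s ⊆ Ioc 0 a := fun u hu => ⟨ht.1.trans_le hu.1, hu.2.trans hs.2⟩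
    exact norm_rpow_smul_sub_le_of_euler hd0.ne' ht.1 ht.2 (fun u hu => hy u (hsub hu))
      (fun u hu => hF u (hsub hu))
  rw [norm_smul, Real.norm_of_nonneg (by positivity), mul_div_assoc', mul_comm C,
    mul_div_assoc] at key
  exact le_of_mul_le_mul_left key (by positivity)

theorem exists_norm_le_of_euler {d a : ℝ} (hd : d < 0 ∨ 1 / 2 < d) {y F : ℝ → E}
    (hy : ∀ s ∈ Ioc 0 a, HasDerivAt y (-(d / s) • y s - F s) s)
    (hyb : ∃ K, ∀ s ∈ Ioc 0 a, √s * ‖y s‖ ≤ K)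
    (hF : ∃ C, ∀ s ∈ Ioc 0 a, s * ‖F s‖ ≤ C) :
    ∃ M, ∀ s ∈ Ioc 0 a, ‖y s‖ ≤ M := by
  obtain ⟨C, hF⟩ := hF
  rcases hd with hd | hd
  · exact exists_norm_le_of_euler_of_neg hd hy hF
  · obtain ⟨K, hyb⟩ := hyb
    exact ⟨C / d, norm_le_of_euler_of_half_lt hd hy hyb hF⟩

end Euler

theorem exists_norm_le_of_forall_apply {β ι : Type*} [Fintype ι] {F : ι → Type*}
    [∀ i, SeminormedAddCommGroup (F i)] {v : β → ∀ i, F i} {S : Set β}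
    (h : ∀ i, ∃ K, ∀ s ∈ S, ‖v s i‖ ≤ K) : ∃ K, ∀ s ∈ S, ‖v s‖ ≤ K := by
  choose K hK using h
  refine ⟨∑ i, |K i|, fun s hs => (pi_norm_le_iff_of_nonneg (by positivity)).2 fun i => ?_⟩
  exact (hK i s hs).trans ((le_abs_self _).trans
    (Finset.single_le_sum (fun j _ => abs_nonneg (K j)) (Finset.mem_univ i)))

section LinftyOp

attribute [local instance] Matrix.linftyOpNormedAddCommGroup

theorem exists_mul_norm_mulVec_apply_le {β m n α : Type*} [Fintype m] [Fintype n] [NormedRing α]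
    (Q : Matrix m n α) {c : β → ℝ} {v : β → n → α} {S : Set β} (hc : ∀ s ∈ S, 0 ≤ c s)
    (hv : ∃ K, ∀ s ∈ S, c s * ‖v s‖ ≤ K) (i : m) :
    ∃ K, ∀ s ∈ S, c s * ‖(Q *ᵥ v s) i‖ ≤ K := by
  obtain ⟨K, hK⟩ := hv
  refine ⟨‖Q‖ * K, fun s hs => ?_⟩
  calc c s * ‖(Q *ᵥ v s) i‖ ≤ c s * (‖Q‖ * ‖v s‖) := by
        gcongr
        · exact hc s hs
        · exact (norm_le_pi_norm _ i).trans (linfty_opNorm_mulVec Q (v s))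
    _ = ‖Q‖ * (c s * ‖v s‖) := by ring
    _ ≤ ‖Q‖ * K := by gcongr; exact hK s hs

end LinftyOp

section Diagonal

variable {ι : Type*} [Fintype ι] [DecidableEq ι]

theorem map_inv_mul_map_eq_diagonal_mul {R S : Type*} [CommRing R] [CommRing S] (f : R →+* S)
    {A P : Matrix ι ι R} {d : ι → R} (hP : IsUnit P.det) (hA : A = P * diagonal d * P⁻¹) :
    P⁻¹.map f * A.map f = diagonal (fun i => f (d i)) * P⁻¹.map f := by
  rw [← Matrix.map_mul, hA, ← mul_assoc, ← mul_assoc, nonsing_inv_mul P hP, one_mul,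
    Matrix.map_mul, diagonal_map (map_zero f)]

theorem hasDerivAt_mulVec_apply_of_intertwine {A Q : Matrix ι ι ℂ} {d : ι → ℝ}
    (hQA : Q * A = diagonal (fun i => (d i : ℂ)) * Q) {x : ℝ → ι → ℂ} {x' e : ι → ℂ} {s : ℝ}
    (hx : HasDerivAt x x' s) (hode : x' + (1 / s) • A *ᵥ x s + e = 0) (i : ι) :
    HasDerivAt (fun u => (Q *ᵥ x u) i) (-(d i / s) • (Q *ᵥ x s) i - (Q *ᵥ e) i) s := by
  have hQx := hasDerivAt_pi.1
    ((Q.mulVecLin.toContinuousLinearMap.restrictScalars ℝ).hasFDerivAt.comp_hasDerivAt s hx) i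
  refine hQx.congr_deriv ?_
  rw [eq_sub_of_add_eq (eq_neg_of_add_eq_zero_left hode)]
  have hQAx : Q *ᵥ (A *ᵥ x s) = fun j => (d j : ℂ) * (Q *ᵥ x s) j := by
    rw [mulVec_mulVec, hQA, ← mulVec_mulVec]
    ext j
    exact mulVec_diagonal _ _ j
  simp only [ContinuousLinearMap.coe_restrictScalars', LinearMap.coe_toContinuousLinearMap',
    mulVecLin_apply, mulVec_sub, mulVec_neg, mulVec_smul, hQAx, Pi.sub_apply, Pi.neg_apply,
    Pi.smul_apply, Complex.real_smul]
  push_cast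
  ring

end Diagonal

theorem stmt_0_general (N : ℕ) (A : Matrix (Fin N) (Fin N) ℝ)
    (hA : ∃ (P : Matrix (Fin N) (Fin N) ℝ) (d : Fin N → ℝ),
      IsUnit P.det ∧ A = P * Matrix.diagonal d * P⁻¹ ∧
      ∀ i, d i < 0 ∨ 1/2 < d i)
    (a : ℝ)
    (x x' E : ℝ → (Fin N → ℂ))
    (hx : ∀ s ∈ Ioc (0:ℝ) a, HasDerivAt x (x' s) s)
    (hxb : ∃ C, ∀ s ∈ Ioc (0:ℝ) a, Real.sqrt s * ‖x s‖ ≤ C)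
    (hEb : ∃ C, ∀ s ∈ Ioc (0:ℝ) a, ‖s • E s‖ ≤ C)
    (hode : ∀ s ∈ Ioc (0:ℝ) a,
      x' s + (1/s) • (A.map (fun r => (r : ℂ))).mulVec (x s) + E s = 0) :
    ∃ C, ∀ s ∈ Ioc (0:ℝ) a, ‖x s‖ ≤ C := by
  obtain ⟨P, d, hP, hAeq, hd⟩ := hA
  set Q := P⁻¹.map Complex.ofRealHom
  have hQA : Q * A.map Complex.ofRealHom = diagonal (fun i => (d i : ℂ)) * Q :=
    map_inv_mul_map_eq_diagonal_mul _ hP hAeq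
  have hPQ : P.map Complex.ofRealHom * Q = 1 := by
    rw [← Matrix.map_mul, mul_nonsing_inv P hP, Matrix.map_one _ (map_zero _) (map_one _)]
  have hsE : ∃ C, ∀ s ∈ Ioc (0:ℝ) a, s * ‖E s‖ ≤ C := by
    obtain ⟨C, hC⟩ := hEb
    exact ⟨C, fun s hs => by simpa [norm_smul, abs_of_pos hs.1] using hC s hs⟩
  have hy : ∀ i, ∃ M, ∀ s ∈ Ioc 0 a, ‖(Q *ᵥ x s) i‖ ≤ M := fun i =>
    exists_norm_le_of_euler (hd i)
      (fun s hs => hasDerivAt_mulVec_apply_of_intertwine hQA (hx s hs) (hode s hs) i)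
      (exists_mul_norm_mulVec_apply_le Q (fun s _ => Real.sqrt_nonneg s) hxb i)
      (exists_mul_norm_mulVec_apply_le Q (fun s hs => hs.1.le) hsE i)
  have hQx : ∃ M, ∀ s ∈ Ioc 0 a, 1 * ‖Q *ᵥ x s‖ ≤ M := by
    simpa only [one_mul] using exists_norm_le_of_forall_apply hy
  refine exists_norm_le_of_forall_apply fun i => ?_
  simpa only [one_mul, mulVec_mulVec, hPQ, one_mulVec] using
    exists_mul_norm_mulVec_apply_le (P.map Complex.ofRealHom) (fun _ _ => zero_le_one) hQx i

/-- If `A` is a diagonalizable real `N × N` matrix all of whose eigenvalues lie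
in `(-∞,0) ∪ (1/2,∞)`, and `x : (0,a] → ℂ^N` is differentiable with `√s * ‖x s‖` bounded,
satisfying `x' + (1/s) A x + E = 0` with `s ↦ ‖s • E s‖` continuous and bounded, then
`‖x s‖` is bounded on `(0,a]`. -/
theorem stmt_0 (N : ℕ) (A : Matrix (Fin N) (Fin N) ℝ)
    (hA : ∃ (P : Matrix (Fin N) (Fin N) ℝ) (d : Fin N → ℝ),
      IsUnit P.det ∧ A = P * Matrix.diagonal d * P⁻¹ ∧
      ∀ i, d i < 0 ∨ 1/2 < d i)
    (a : ℝ) (ha : 0 < a)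
    (x x' E : ℝ → (Fin N → ℂ))
    (hx : ∀ s ∈ Ioc (0:ℝ) a, HasDerivAt x (x' s) s)
    (hxb : ∃ C, ∀ s ∈ Ioc (0:ℝ) a, Real.sqrt s * ‖x s‖ ≤ C)
    (hE : ContinuousOn (fun s => s • E s) (Ioc (0:ℝ) a))
    (hEb : ∃ C, ∀ s ∈ Ioc (0:ℝ) a, ‖s • E s‖ ≤ C)
    (hode : ∀ s ∈ Ioc (0:ℝ) a,
      x' s + (1/s) • (A.map (fun r => (r : ℂ))).mulVec (x s) + E s = 0) :
    ∃ C, ∀ s ∈ Ioc (0:ℝ) a, ‖x s‖ ≤ C :=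
  stmt_0_general N A hA a x x' E hx hxb hEb hode
end

section
/- Let λ < 0 and let y : (0,a] → ℂ be differentiable with s^{1/2}|y(s)| bounded, satisfying y'(s) + (λ/s) y(s) + E(s) = 0 with |s E(s)| continuous and bounded. Then y is bounded on (0,a]: explicitly, y(s) = s^{-λ} a^{λ} y(a) + s^{-λ} ∫_s^a t^{λ} E(t) dt, and this expression is uniformly bounded. -/
/-!
The factor `t ^ l` integrates the equation: `(t ^ l * y t)' = -t ^ l * E t`, so integrating over
`[s, a]` gives `s ^ l * y s = a ^ l * y a + ∫ t in s..a, t ^ l * E t`. As `|t ^ l * E t| ≤ C t ^ (l - 1)`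
and `l < 0`, the integral is at most `C s ^ l / (-l)`; dividing by `s ^ l` and using `a ^ l ≤ s ^ l`
gives `|y s| ≤ |y a| + C / (-l)`.
-/

open Set

section

variable {l : ℝ} {y y' E : ℝ → ℂ}

theorem continuousOn_ofReal_rpow_const {s : Set ℝ} (hs : ∀ t ∈ s, 0 < t) :
    ContinuousOn (fun t : ℝ => ((t ^ l : ℝ) : ℂ)) s :=
  Complex.continuous_ofReal.comp_continuousOn
    (continuousOn_id.rpow_const fun t ht => Or.inl (hs t ht).ne')

theorem hasDerivAt_rpow_mul_of_ode {t : ℝ} (ht : 0 < t) (hy : HasDerivAt y (y' t) t)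
    (hode : y' t + (l / t) • y t + E t = 0) :
    HasDerivAt (fun u => ((u ^ l : ℝ) : ℂ) * y u) (-(((t ^ l : ℝ) : ℂ) * E t)) t := by
  have hpow : HasDerivAt (fun u : ℝ => ((u ^ l : ℝ) : ℂ)) ((l * t ^ (l - 1) : ℝ) : ℂ) t :=
    (Real.hasDerivAt_rpow_const (Or.inl ht.ne')).ofReal_comp
  refine (hpow.mul hy).congr_deriv ?_
  rw [Real.rpow_sub_one ht.ne', Complex.real_smul] at *
  push_cast at *
  linear_combination ((t ^ l : ℝ) : ℂ) * hode

theorem rpow_mul_eq_add_integral_of_ode {s a : ℝ} (hs : 0 < s) (hsa : s ≤ a)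
    (hy : ∀ t ∈ Icc s a, HasDerivAt y (y' t) t) (hE : ContinuousOn E (Icc s a))
    (hode : ∀ t ∈ Icc s a, y' t + (l / t) • y t + E t = 0) :
    ((s ^ l : ℝ) : ℂ) * y s = ((a ^ l : ℝ) : ℂ) * y a + ∫ t in s..a, ((t ^ l : ℝ) : ℂ) * E t := by
  have hpos : ∀ t ∈ Icc s a, 0 < t := fun t ht => hs.trans_le ht.1
  have hint : IntervalIntegrable (fun t => -(((t ^ l : ℝ) : ℂ) * E t)) MeasureTheory.volume s a :=
    ContinuousOn.intervalIntegrable <| by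
      rw [uIcc_of_le hsa]
      exact ((continuousOn_ofReal_rpow_const hpos).mul hE).neg
  have hftc := intervalIntegral.integral_eq_sub_of_hasDerivAt
    (fun t ht => hasDerivAt_rpow_mul_of_ode (l := l) (hpos t (uIcc_of_le hsa ▸ ht))
      (hy t (uIcc_of_le hsa ▸ ht)) (hode t (uIcc_of_le hsa ▸ ht))) hint
  rw [intervalIntegral.integral_neg] at hftc
  linear_combination hftc

theorem norm_integral_rpow_mul_le {s a C : ℝ} (hl : l < 0) (hs : 0 < s) (hsa : s ≤ a)
    (hEb : ∀ t ∈ Icc s a, t * ‖E t‖ ≤ C) :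
    ‖∫ t in s..a, ((t ^ l : ℝ) : ℂ) * E t‖ ≤ C / -l * s ^ l := by
  have hC : 0 ≤ C := (by positivity : 0 ≤ s * ‖E s‖).trans (hEb s ⟨le_rfl, hsa⟩)
  have hpointwise : ∀ t ∈ Ioc s a, ‖((t ^ l : ℝ) : ℂ) * E t‖ ≤ C * t ^ (l - 1) := by
    intro t ht
    have ht0 : 0 < t := hs.trans ht.1
    rw [norm_mul, Complex.norm_real, Real.norm_of_nonneg (by positivity),
      Real.rpow_sub_one ht0.ne', mul_div_assoc', le_div_iff₀ ht0]
    nlinarith [hEb t (Ioc_subset_Icc_self ht), Real.rpow_pos_of_pos ht0 l]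
  have hgint : IntervalIntegrable (fun t => C * t ^ (l - 1)) MeasureTheory.volume s a :=
    ContinuousOn.intervalIntegrable <| by
      rw [uIcc_of_le hsa]
      exact continuousOn_const.mul
        (continuousOn_id.rpow_const fun t ht => Or.inl (hs.trans_le ht.1).ne')
  calc ‖∫ t in s..a, ((t ^ l : ℝ) : ℂ) * E t‖ ≤ ∫ t in s..a, C * t ^ (l - 1) :=
        intervalIntegral.norm_integral_le_of_norm_le hsa
          (Filter.Eventually.of_forall hpointwise) hgint
    _ = C / -l * (s ^ l - a ^ l) := by
        rw [intervalIntegral.integral_const_mul, integral_rpow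
          (Or.inr ⟨by linarith, fun h => (not_le.mpr hs) (uIcc_of_le hsa ▸ h).1⟩), sub_add_cancel]
        field_simp
        ring
    _ ≤ C / -l * s ^ l := by
        have : 0 ≤ C / -l := div_nonneg hC (by linarith)
        nlinarith [Real.rpow_pos_of_pos (hs.trans_le hsa) l]

theorem norm_le_of_ode {s a C : ℝ} (hl : l < 0) (hs : 0 < s) (hsa : s ≤ a)
    (hy : ∀ t ∈ Icc s a, HasDerivAt y (y' t) t) (hE : ContinuousOn E (Icc s a))
    (hEb : ∀ t ∈ Icc s a, t * ‖E t‖ ≤ C)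
    (hode : ∀ t ∈ Icc s a, y' t + (l / t) • y t + E t = 0) :
    ‖y s‖ ≤ ‖y a‖ + C / -l := by
  have hsl : 0 < s ^ l := Real.rpow_pos_of_pos hs l
  have hal : a ^ l ≤ s ^ l := Real.rpow_le_rpow_of_nonpos hs hsa hl.le
  refine le_of_mul_le_mul_left ?_ hsl
  calc s ^ l * ‖y s‖ = ‖((s ^ l : ℝ) : ℂ) * y s‖ := by
        rw [norm_mul, Complex.norm_real, Real.norm_of_nonneg hsl.le]
    _ ≤ a ^ l * ‖y a‖ + C / -l * s ^ l := by
        rw [rpow_mul_eq_add_integral_of_ode hs hsa hy hE hode]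
        refine (norm_add_le _ _).trans (add_le_add ?_ (norm_integral_rpow_mul_le hl hs hsa hEb))
        rw [norm_mul, Complex.norm_real, Real.norm_of_nonneg
          (Real.rpow_nonneg (hs.trans_le hsa).le l)]
    _ ≤ s ^ l * (‖y a‖ + C / -l) := by
        nlinarith [norm_nonneg (y a)]

end

theorem stmt_1_general (a : ℝ) (l : ℝ) (hl : l < 0)
    (y y' E : ℝ → ℂ)
    (hy : ∀ s ∈ Ioc (0:ℝ) a, HasDerivAt y (y' s) s)
    (hE : ContinuousOn E (Ioc (0:ℝ) a))
    (hEb : ∃ C, ∀ s ∈ Ioc (0:ℝ) a, s * ‖E s‖ ≤ C)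
    (hode : ∀ s ∈ Ioc (0:ℝ) a, y' s + (l/s) • y s + E s = 0) :
    (∀ s ∈ Ioc (0:ℝ) a,
      y s = ((s ^ (-l) : ℝ) : ℂ) * ((a ^ l : ℝ) : ℂ) * y a
        + ((s ^ (-l) : ℝ) : ℂ) * ∫ t in s..a, ((t ^ l : ℝ) : ℂ) * E t) ∧
    ∃ C, ∀ s ∈ Ioc (0:ℝ) a, ‖y s‖ ≤ C := by
  obtain ⟨C, hC⟩ := hEb
  have hsub : ∀ s ∈ Ioc (0:ℝ) a, Icc s a ⊆ Ioc 0 a := fun s hs => Icc_subset_Ioc hs.1 le_rfl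
  refine ⟨fun s hs => ?_, ‖y a‖ + C / -l, fun s hs => ?_⟩
  · rw [mul_assoc, ← mul_add, ← rpow_mul_eq_add_integral_of_ode hs.1 hs.2
      (fun t ht => hy t (hsub s hs ht)) (hE.mono (hsub s hs)) (fun t ht => hode t (hsub s hs ht)),
      ← mul_assoc, ← Complex.ofReal_mul, ← Real.rpow_add hs.1, neg_add_cancel, Real.rpow_zero,
      Complex.ofReal_one, one_mul]
  · exact norm_le_of_ode hl hs.1 hs.2 (fun t ht => hy t (hsub s hs ht)) (hE.mono (hsub s hs))
      (fun t ht => hC t (hsub s hs ht)) (fun t ht => hode t (hsub s hs ht))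

/-- For `λ < 0`, a differentiable `y : (0,a] → ℂ` with `√s * |y s|` bounded,
satisfying `y' + (λ/s) y + E = 0` with `s|E(s)|` continuous and bounded, satisfies
`y s = s^{-λ} a^{λ} y a + s^{-λ} ∫_s^a t^{λ} E t dt` and is uniformly bounded. -/
theorem stmt_1 (a : ℝ) (ha : 0 < a) (l : ℝ) (hl : l < 0)
    (y y' E : ℝ → ℂ)
    (hy : ∀ s ∈ Ioc (0:ℝ) a, HasDerivAt y (y' s) s)
    (hyb : ∃ C, ∀ s ∈ Ioc (0:ℝ) a, Real.sqrt s * ‖y s‖ ≤ C)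
    (hE : ContinuousOn E (Ioc (0:ℝ) a))
    (hEb : ∃ C, ∀ s ∈ Ioc (0:ℝ) a, s * ‖E s‖ ≤ C)
    (hode : ∀ s ∈ Ioc (0:ℝ) a, y' s + (l/s) • y s + E s = 0) :
    (∀ s ∈ Ioc (0:ℝ) a,
      y s = ((s ^ (-l) : ℝ) : ℂ) * ((a ^ l : ℝ) : ℂ) * y a
        + ((s ^ (-l) : ℝ) : ℂ) * ∫ t in s..a, ((t ^ l : ℝ) : ℂ) * E t) ∧
    ∃ C, ∀ s ∈ Ioc (0:ℝ) a, ‖y s‖ ≤ C :=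
  stmt_1_general a l hl y y' E hy hE hEb hode
end

section
/- Let λ > 1/2 and let y : (0,a] → ℂ be differentiable with s^{1/2}|y(s)| bounded, satisfying y'(s) + (λ/s) y(s) + E(s) = 0 with |s E(s)| continuous and bounded. Then y(s) = -s^{-λ} ∫_0^s t^{λ} E(t) dt, and y is uniformly bounded on (0,a]. -/
/-! Multiplying by the integrating factor `s ^ l` turns the equation into
`(s ^ l • y)' = -s ^ l • E`. As `‖s ^ l • y s‖ ≤ C s ^ (l - 1/2) → 0` for `l > 1/2`,
integrating from `0` gives `s ^ l • y s = -∫₀ˢ t ^ l • E t`, and `‖t ^ l • E t‖ ≤ C t ^ (l - 1)`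
bounds the right side by `C s ^ l / l`, so `‖y s‖ ≤ C / l`. -/

open Set Filter Topology MeasureTheory intervalIntegral

section PowerBounds

variable {V : Type*} [NormedAddCommGroup V] {f : ℝ → V} {s C r : ℝ}

lemma tendsto_nhdsGT_zero_of_norm_le_mul_rpow (hr : 0 < r)
    (hbound : ∀ᶠ t in 𝓝[>] 0, ‖f t‖ ≤ C * t ^ r) : Tendsto f (𝓝[>] 0) (𝓝 0) := by
  have hpow : Tendsto (fun t : ℝ => C * t ^ r) (𝓝[>] 0) (𝓝 0) := by
    have := ((Real.continuousAt_rpow_const 0 r (.inr hr.le)).tendsto.const_mul C).mono_left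
      (nhdsWithin_le_nhds (s := Ioi 0))
    rwa [Real.zero_rpow hr.ne', mul_zero] at this
  exact squeeze_zero_norm' hbound hpow

lemma intervalIntegrable_of_norm_le_mul_rpow (hs : 0 ≤ s) (hr : -1 < r)
    (hf : ContinuousOn f (Ioc 0 s)) (hbound : ∀ t ∈ Ioc 0 s, ‖f t‖ ≤ C * t ^ r) :
    IntervalIntegrable f volume 0 s := by
  have hg : IntervalIntegrable (fun t => C * t ^ r) volume 0 s :=
    (intervalIntegrable_rpow' hr).const_mul C
  rw [intervalIntegrable_iff_integrableOn_Ioc_of_le hs] at hg ⊢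
  exact hg.mono' (hf.aestronglyMeasurable measurableSet_Ioc)
    ((ae_restrict_iff' measurableSet_Ioc).2 (.of_forall hbound))

variable [NormedSpace ℝ V]

lemma norm_integral_le_of_norm_le_mul_rpow (hs : 0 ≤ s) (hr : -1 < r)
    (hbound : ∀ t ∈ Ioc 0 s, ‖f t‖ ≤ C * t ^ r) :
    ‖∫ t in 0..s, f t‖ ≤ C / (r + 1) * s ^ (r + 1) := by
  have hr1 : r + 1 ≠ 0 := by linarith
  calc ‖∫ t in 0..s, f t‖ ≤ ∫ t in 0..s, C * t ^ r :=
        norm_integral_le_of_norm_le hs (.of_forall hbound)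
          ((intervalIntegrable_rpow' hr).const_mul C)
    _ = C / (r + 1) * s ^ (r + 1) := by
        rw [intervalIntegral.integral_const_mul, integral_rpow (.inl hr), Real.zero_rpow hr1]
        ring

lemma norm_rpow_smul_le_of_rpow_mul_norm_le {t p q : ℝ} {v : V} (ht : 0 < t)
    (h : t ^ p * ‖v‖ ≤ C) : ‖t ^ q • v‖ ≤ C * t ^ (q - p) := by
  calc ‖t ^ q • v‖ = t ^ (q - p) * (t ^ p * ‖v‖) := by
        rw [norm_smul, Real.norm_of_nonneg (Real.rpow_nonneg ht.le _), ← mul_assoc,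
          ← Real.rpow_add ht, sub_add_cancel]
    _ ≤ C * t ^ (q - p) := by
        rw [mul_comm C]
        exact mul_le_mul_of_nonneg_left h (Real.rpow_nonneg ht.le _)

lemma norm_rpow_smul_le_of_mul_norm_le {t q : ℝ} {v : V} (ht : 0 < t) (h : t * ‖v‖ ≤ C) :
    ‖t ^ q • v‖ ≤ C * t ^ (q - 1) :=
  norm_rpow_smul_le_of_rpow_mul_norm_le ht (by rwa [Real.rpow_one])

end PowerBounds

section EulerEquation

variable {V : Type*} [NormedAddCommGroup V] [NormedSpace ℝ V] {l : ℝ} {y y' E : ℝ → V}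

lemma hasDerivAt_rpow_smul_of_add_div_smul_add_eq_zero {t : ℝ} (ht : 0 < t)
    (hy : HasDerivAt y (y' t) t) (hode : y' t + (l / t) • y t + E t = 0) :
    HasDerivAt (fun u => u ^ l • y u) (-(t ^ l • E t)) t := by
  have hpow : HasDerivAt (fun u : ℝ => u ^ l) (l * t ^ (l - 1)) t :=
    Real.hasDerivAt_rpow_const (.inl ht.ne')
  have hcoeff : l * t ^ (l - 1) = t ^ l * (l / t) := by
    rw [Real.rpow_sub_one ht.ne']
    ring
  refine (hpow.smul hy).congr_deriv ?_
  rw [hcoeff, mul_smul, ← smul_add, eq_neg_of_add_eq_zero_left hode, smul_neg]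

variable [CompleteSpace V] {a Cy Ce : ℝ}

lemma rpow_smul_eq_neg_integral_of_add_div_smul_add_eq_zero (hl : 1 / 2 < l)
    (hy : ∀ s ∈ Ioc 0 a, HasDerivAt y (y' s) s) (hyb : ∀ s ∈ Ioc 0 a, √s * ‖y s‖ ≤ Cy)
    (hE : ContinuousOn E (Ioc 0 a)) (hEb : ∀ s ∈ Ioc 0 a, s * ‖E s‖ ≤ Ce)
    (hode : ∀ s ∈ Ioc 0 a, y' s + (l / s) • y s + E s = 0) {s : ℝ} (hs : s ∈ Ioc 0 a) :
    s ^ l • y s = -∫ t in 0..s, t ^ l • E t := by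
  have hsa : Ioc 0 s ⊆ Ioc 0 a := Ioc_subset_Ioc_right hs.2
  have hderiv : ∀ t ∈ Ioc 0 a, HasDerivAt (fun u => u ^ l • y u) (-(t ^ l • E t)) t :=
    fun t ht => hasDerivAt_rpow_smul_of_add_div_smul_add_eq_zero ht.1 (hy t ht) (hode t ht)
  have hint : IntervalIntegrable (fun t => t ^ l • E t) volume 0 s :=
    intervalIntegrable_of_norm_le_mul_rpow (r := l - 1) hs.1.le (by linarith)
      ((continuousOn_id.rpow_const fun t ht => .inl ht.1.ne').smul (hE.mono hsa))
      fun t ht => norm_rpow_smul_le_of_mul_norm_le ht.1 (hEb t (hsa ht))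
  have hzero : Tendsto (fun u => u ^ l • y u) (𝓝[>] 0) (𝓝 0) := by
    refine tendsto_nhdsGT_zero_of_norm_le_mul_rpow (C := Cy) (r := l - 1 / 2) (by linarith) ?_
    filter_upwards [Ioc_mem_nhdsGT (hs.1.trans_le hs.2)] with t ht
    exact norm_rpow_smul_le_of_rpow_mul_norm_le ht.1
      (by rw [← Real.sqrt_eq_rpow]; exact hyb t ht)
  have hftc := integral_eq_sub_of_hasDerivAt_of_tendsto hs.1
    (fun t ht => hderiv t (hsa (Ioo_subset_Ioc_self ht))) hint.neg hzero
    ((hderiv s hs).continuousAt.tendsto.mono_left nhdsWithin_le_nhds)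
  rw [intervalIntegral.integral_neg, sub_zero] at hftc
  exact hftc.symm

end EulerEquation

theorem stmt_2_general (a : ℝ) (l : ℝ) (hl : 1/2 < l)
    (y y' E : ℝ → ℂ)
    (hy : ∀ s ∈ Ioc (0:ℝ) a, HasDerivAt y (y' s) s)
    (hyb : ∃ C, ∀ s ∈ Ioc (0:ℝ) a, Real.sqrt s * ‖y s‖ ≤ C)
    (hE : ContinuousOn E (Ioc (0:ℝ) a))
    (hEb : ∃ C, ∀ s ∈ Ioc (0:ℝ) a, s * ‖E s‖ ≤ C)
    (hode : ∀ s ∈ Ioc (0:ℝ) a, y' s + (l/s) • y s + E s = 0) :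
    (∀ s ∈ Ioc (0:ℝ) a,
      y s = -(((s ^ (-l) : ℝ) : ℂ) * ∫ t in (0:ℝ)..s, ((t ^ l : ℝ) : ℂ) * E t)) ∧
    ∃ C, ∀ s ∈ Ioc (0:ℝ) a, ‖y s‖ ≤ C := by
  obtain ⟨Cy, hCy⟩ := hyb
  obtain ⟨Ce, hCe⟩ := hEb
  have hsol : ∀ s ∈ Ioc (0:ℝ) a, y s = -(s ^ (-l) • ∫ t in (0:ℝ)..s, t ^ l • E t) := by
    intro s hs
    rw [← smul_neg,
      ← rpow_smul_eq_neg_integral_of_add_div_smul_add_eq_zero hl hy hCy hE hCe hode hs, smul_smul,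
      ← Real.rpow_add hs.1, neg_add_cancel, Real.rpow_zero, one_smul]
  refine ⟨fun s hs => by simpa only [Complex.real_smul] using hsol s hs, Ce / l, fun s hs => ?_⟩
  have hint := norm_integral_le_of_norm_le_mul_rpow (r := l - 1) hs.1.le (by linarith)
    fun t ht => norm_rpow_smul_le_of_mul_norm_le ht.1 (hCe t ⟨ht.1, ht.2.trans hs.2⟩)
  rw [sub_add_cancel] at hint
  calc ‖y s‖ = s ^ (-l) * ‖∫ t in (0:ℝ)..s, t ^ l • E t‖ := by
        rw [hsol s hs, norm_neg, norm_smul, Real.norm_of_nonneg (Real.rpow_nonneg hs.1.le _)]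
    _ ≤ s ^ (-l) * (Ce / l * s ^ l) :=
        mul_le_mul_of_nonneg_left hint (Real.rpow_nonneg hs.1.le _)
    _ = Ce / l := by
        rw [mul_left_comm, ← Real.rpow_add hs.1, neg_add_cancel, Real.rpow_zero, mul_one]

/-- For `λ > 1/2`, a differentiable `y : (0,a] → ℂ` with `√s * |y s|` bounded,
satisfying `y' + (λ/s) y + E = 0` with `s|E(s)|` continuous and bounded, satisfies
`y s = -s^{-λ} ∫_0^s t^{λ} E t dt` and is uniformly bounded on `(0,a]`. -/
theorem stmt_2 (a : ℝ) (ha : 0 < a) (l : ℝ) (hl : 1/2 < l)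
    (y y' E : ℝ → ℂ)
    (hy : ∀ s ∈ Ioc (0:ℝ) a, HasDerivAt y (y' s) s)
    (hyb : ∃ C, ∀ s ∈ Ioc (0:ℝ) a, Real.sqrt s * ‖y s‖ ≤ C)
    (hE : ContinuousOn E (Ioc (0:ℝ) a))
    (hEb : ∃ C, ∀ s ∈ Ioc (0:ℝ) a, s * ‖E s‖ ≤ C)
    (hode : ∀ s ∈ Ioc (0:ℝ) a, y' s + (l/s) • y s + E s = 0) :
    (∀ s ∈ Ioc (0:ℝ) a,
      y s = -(((s ^ (-l) : ℝ) : ℂ) * ∫ t in (0:ℝ)..s, ((t ^ l : ℝ) : ℂ) * E t)) ∧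
    ∃ C, ∀ s ∈ Ioc (0:ℝ) a, ‖y s‖ ≤ C :=
  stmt_2_general a l hl y y' E hy hyb hE hEb hode
end

section
/- Suppose real-valued differentiable functions f₁, f₂, f₃ on (0, ε] satisfy |f_j(s)| ≤ C s^{-1/2} and the system (d/ds) f₁ + (f₂ + f₃)/s + E₁(s) = 0 (with cyclic permutations), where |E_j(s)| ≤ C s^{-1}. Then (d/ds)[s²(f₁+f₂+f₃)] = O(s), hence f₁ + f₂ + f₃ is bounded on (0, ε]. -/
open Set

/-!
Summing the three equations gives `F' + 2F/s + (E₁ + E₂ + E₃) = 0` for `F = f₁ + f₂ + f₃`, i.e.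
`(s²F)' = -s²(E₁ + E₂ + E₃)`, which is `O(s)`. Since `s²F = O(s^{3/2})` tends to `0` at `0⁺`,
the mean value theorem on `[a, s]` with `a → 0⁺` gives `|s²F(s)| ≤ 3Cs²`, so `|F| ≤ 3C`.
-/

open Filter Topology

theorem abs_le_mul_of_abs_deriv_le_of_tendsto_nhdsGT_zero {g g' : ℝ → ℝ} {M s : ℝ} (hs : 0 < s)
    (hg : ∀ t ∈ Ioc 0 s, HasDerivAt g (g' t) t) (hg' : ∀ t ∈ Ioc 0 s, |g' t| ≤ M)
    (hlim : Tendsto g (𝓝[>] 0) (𝓝 0)) : |g s| ≤ M * s := by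
  have hmvt : ∀ a ∈ Ioc 0 s, |g s - g a| ≤ M * (s - a) := fun a ha =>
    norm_image_sub_le_of_norm_deriv_le_segment'
      (fun t ht => (hg t ⟨ha.1.trans_le ht.1, ht.2⟩).hasDerivWithinAt)
      (fun t ht => hg' t ⟨ha.1.trans_le ht.1, ht.2.le⟩) s (right_mem_Icc.2 ha.2)
  have hleft : Tendsto (fun a => |g s - g a|) (𝓝[>] 0) (𝓝 |g s|) := by
    simpa using (tendsto_const_nhds.sub hlim).abs
  have hright : Tendsto (fun a => M * (s - a)) (𝓝[>] 0) (𝓝 (M * s)) := by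
    have : Tendsto (fun a => M * (s - a)) (𝓝 0) (𝓝 (M * (s - 0))) :=
      (continuous_const.mul (continuous_const.sub continuous_id)).tendsto 0
    simpa using this.mono_left nhdsWithin_le_nhds
  exact le_of_tendsto_of_tendsto hleft hright (eventually_of_mem (Ioc_mem_nhdsGT hs) hmvt)

theorem tendsto_sq_mul_nhdsGT_zero_of_abs_le_rpow {F : ℝ → ℝ} {K p : ℝ} (hp : -2 < p)
    (hF : ∀ᶠ t in 𝓝[>] 0, |F t| ≤ K * t ^ p) :
    Tendsto (fun t => t ^ 2 * F t) (𝓝[>] 0) (𝓝 0) := by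
  have hpow : Tendsto (fun t : ℝ => K * t ^ (2 + p)) (𝓝[>] 0) (𝓝 0) := by
    have := (Real.continuousAt_rpow_const 0 (2 + p) (Or.inr (by linarith))).const_mul K
    simpa [Real.zero_rpow (by linarith : 2 + p ≠ 0)] using this.mono_left nhdsWithin_le_nhds
  refine squeeze_zero_norm' ?_ hpow
  filter_upwards [hF, self_mem_nhdsWithin] with t ht (htpos : 0 < t)
  calc ‖t ^ 2 * F t‖ = t ^ 2 * |F t| := by rw [Real.norm_eq_abs, abs_mul, abs_sq]
    _ ≤ t ^ 2 * (K * t ^ p) := by gcongr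
    _ = K * t ^ (2 + p) := by
      rw [Real.rpow_add htpos, ← Real.rpow_natCast]
      push_cast
      ring

theorem abs_two_mul_sum_add_sq_mul_sum_le {s C a₁ a₂ a₃ b₁ b₂ b₃ e₁ e₂ e₃ : ℝ} (hs : 0 < s)
    (h₁ : b₁ + (a₂ + a₃) / s + e₁ = 0) (h₂ : b₂ + (a₃ + a₁) / s + e₂ = 0)
    (h₃ : b₃ + (a₁ + a₂) / s + e₃ = 0)
    (he₁ : |e₁| ≤ C / s) (he₂ : |e₂| ≤ C / s) (he₃ : |e₃| ≤ C / s) :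
    |2 * s * (a₁ + a₂ + a₃) + s ^ 2 * (b₁ + b₂ + b₃)| ≤ 3 * C * s := by
  have hsum : 2 * s * (a₁ + a₂ + a₃) + s ^ 2 * (b₁ + b₂ + b₃) = -(s ^ 2 * (e₁ + e₂ + e₃)) := by
    field_simp at h₁ h₂ h₃
    linear_combination s * (h₁ + h₂ + h₃)
  calc _ = s ^ 2 * |e₁ + e₂ + e₃| := by rw [hsum, abs_neg, abs_mul, abs_sq]
    _ ≤ s ^ 2 * (3 * (C / s)) := by
      gcongr
      linarith [abs_add_le (e₁ + e₂) e₃, abs_add_le e₁ e₂]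
    _ = 3 * C * s := by field_simp

/-- if real differentiable `f₁, f₂, f₃` on `(0, ε]` satisfy `|fⱼ(s)| ≤ C s^{-1/2}`
and `fⱼ' + (f_{j+1} + f_{j+2})/s + Eⱼ = 0` (cyclically) with `|Eⱼ(s)| ≤ C/s`, then
`(d/ds)[s²(f₁+f₂+f₃)] = O(s)`, hence `f₁ + f₂ + f₃` is bounded on `(0, ε]`. -/
theorem stmt_8 (ε C : ℝ) (hε : 0 < ε) (hC : 0 < C)
    (f₁ f₂ f₃ f₁' f₂' f₃' E₁ E₂ E₃ : ℝ → ℝ)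
    (hd : ∀ s ∈ Ioc (0:ℝ) ε,
      HasDerivAt f₁ (f₁' s) s ∧ HasDerivAt f₂ (f₂' s) s ∧ HasDerivAt f₃ (f₃' s) s)
    (hb : ∀ s ∈ Ioc (0:ℝ) ε,
      |f₁ s| ≤ C * s ^ (-(1:ℝ)/2) ∧ |f₂ s| ≤ C * s ^ (-(1:ℝ)/2) ∧ |f₃ s| ≤ C * s ^ (-(1:ℝ)/2))
    (hode : ∀ s ∈ Ioc (0:ℝ) ε,
      f₁' s + (f₂ s + f₃ s)/s + E₁ s = 0 ∧
      f₂' s + (f₃ s + f₁ s)/s + E₂ s = 0 ∧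
      f₃' s + (f₁ s + f₂ s)/s + E₃ s = 0)
    (hEb : ∀ s ∈ Ioc (0:ℝ) ε, |E₁ s| ≤ C / s ∧ |E₂ s| ≤ C / s ∧ |E₃ s| ≤ C / s) :
    (∃ C', ∀ s ∈ Ioc (0:ℝ) ε,
      |2*s*(f₁ s + f₂ s + f₃ s) + s^2*(f₁' s + f₂' s + f₃' s)| ≤ C' * s) ∧
    (∃ C'', ∀ s ∈ Ioc (0:ℝ) ε, |f₁ s + f₂ s + f₃ s| ≤ C'') := by
  have hderiv_le : ∀ s ∈ Ioc (0:ℝ) ε,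
      |2*s*(f₁ s + f₂ s + f₃ s) + s^2*(f₁' s + f₂' s + f₃' s)| ≤ 3 * C * s := fun s hs =>
    let ⟨h₁, h₂, h₃⟩ := hode s hs
    let ⟨e₁, e₂, e₃⟩ := hEb s hs
    abs_two_mul_sum_add_sq_mul_sum_le hs.1 h₁ h₂ h₃ e₁ e₂ e₃
  refine ⟨⟨3 * C, hderiv_le⟩, 3 * C, fun s hs => ?_⟩
  have hg : ∀ t ∈ Ioc 0 s, HasDerivAt (fun t => t^2 * (f₁ t + f₂ t + f₃ t))
      (2*t*(f₁ t + f₂ t + f₃ t) + t^2*(f₁' t + f₂' t + f₃' t)) t := by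
    intro t ht
    obtain ⟨d₁, d₂, d₃⟩ := hd t ⟨ht.1, ht.2.trans hs.2⟩
    exact ((hasDerivAt_pow 2 t).fun_mul ((d₁.fun_add d₂).fun_add d₃)).congr_deriv (by ring)
  have hsum_le : ∀ t ∈ Ioc (0:ℝ) ε, |f₁ t + f₂ t + f₃ t| ≤ 3 * C * t ^ (-(1:ℝ)/2) := by
    intro t ht
    obtain ⟨b₁, b₂, b₃⟩ := hb t ht
    linarith [abs_add_le (f₁ t + f₂ t) (f₃ t), abs_add_le (f₁ t) (f₂ t)]
  have hlim := tendsto_sq_mul_nhdsGT_zero_of_abs_le_rpow (by norm_num)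
    (eventually_of_mem (Ioc_mem_nhdsGT hε) hsum_le)
  have hsq := abs_le_mul_of_abs_deriv_le_of_tendsto_nhdsGT_zero hs.1 hg
    (fun t ht => (hderiv_le t ⟨ht.1, ht.2.trans hs.2⟩).trans
      (mul_le_mul_of_nonneg_left ht.2 (by linarith))) hlim
  rw [abs_mul, abs_sq, mul_assoc, ← sq, mul_comm] at hsq
  exact le_of_mul_le_mul_right hsq (pow_pos hs.1 2)
end

section
/- For all weights w_a of an su(2) irreducible representation of highest weight μ (so w_a ∈ [-μ, μ]) and all s > 0, |t| > 0: (μ² + 2μ - w_a²)/(4s²) + (w_a/(2s) - |t|)² ≥ (2/(μ+2)) |t|², hence ∑_{j=1}^3 |(iρ_j/(2s) + t_j) f|² ≥ (2/(μ+2)) |t|² |f|² for every f. -/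
/-!
With `r = 1/(2s)`, the operator `∑ⱼ (r iρⱼ + tⱼ)²` equals `r²(μ² + 2μ) + 2r ∑ⱼ tⱼ iρⱼ + |t|²` by
the Casimir identity, so it acts on the `a`-th weight space as the scalar
`r²(μ² + 2μ) + 2r|t|wₐ + |t|²`. Since the `iρⱼ` are Hermitian, `∑ⱼ |(r iρⱼ + tⱼ) f|²` is the
quadratic form of this operator, i.e. the average of these scalars weighted by `|πₐ f|²`.
Each scalar is at least its value at the extreme weight `wₐ = -μ`, and that value exceeds
`2|t|²/(μ+2)` by the square `μ/(μ+2) (r(μ+2) - |t|)²`.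
-/

open Matrix

lemma two_div_add_two_mul_sq_le {μ W r T : ℝ} (hμ : 0 ≤ μ) (hW : -μ ≤ W) (hr : 0 ≤ r)
    (hT : 0 ≤ T) :
    2 / (μ + 2) * T ^ 2 ≤ r ^ 2 * (μ ^ 2 + 2 * μ) + 2 * r * T * W + T ^ 2 := by
  have hextreme : 2 / (μ + 2) * T ^ 2 + μ / (μ + 2) * (r * (μ + 2) - T) ^ 2
      = r ^ 2 * (μ ^ 2 + 2 * μ) + 2 * r * T * -μ + T ^ 2 := by
    field_simp
    ring
  have hsq : 0 ≤ μ / (μ + 2) * (r * (μ + 2) - T) ^ 2 := by positivity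
  have hlin : 2 * r * T * -μ ≤ 2 * r * T * W := by gcongr
  linarith

section SumOfSquares

variable {K A κ : Type*} [CommSemiring K] [Semiring A] [Algebra K A] [Fintype κ]

lemma sum_smul_add_smul_one_mul_self (r : K) (t : κ → K) (X : κ → A) :
    ∑ j, (r • X j + t j • 1) * (r • X j + t j • 1)
      = r ^ 2 • ∑ j, X j * X j + (2 * r) • ∑ j, t j • X j + (∑ j, t j ^ 2) • 1 := by
  have hterm j : (r • X j + t j • 1) * (r • X j + t j • 1)
      = r ^ 2 • (X j * X j) + (2 * r) • (t j • X j) + t j ^ 2 • (1 : A) := by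
    simp only [add_mul, mul_add, smul_mul_smul_comm, mul_one, one_mul, smul_smul]
    module
  simp only [hterm, Finset.sum_add_distrib, Finset.smul_sum, Finset.sum_smul]

lemma sum_mul_self_mul_eq_smul_of_casimir {X : κ → A} {P : A} {C x : K} (r : K) (t : κ → K)
    (hcas : ∑ j, X j * X j = C • 1) (heig : (∑ j, t j • X j) * P = x • P) :
    (∑ j, (r • X j + t j • 1) * (r • X j + t j • 1)) * P
      = (r ^ 2 * C + 2 * r * x + ∑ j, t j ^ 2) • P := by
  rw [sum_smul_add_smul_one_mul_self, hcas, add_mul, add_mul, smul_mul_assoc (2 * r), heig]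
  simp only [smul_mul_assoc, one_mul, smul_smul, ← add_smul]

end SumOfSquares

lemma isHermitian_I_smul_of_conjTranspose_eq_neg {n : Type*} {A : Matrix n n ℂ} (hA : Aᴴ = -A) :
    (Complex.I • A).IsHermitian := by
  rw [IsHermitian, conjTranspose_smul, hA, Complex.star_def, Complex.conj_I, neg_smul, smul_neg,
    neg_neg]

lemma Matrix.IsHermitian.ofReal_smul_add_ofReal_smul_one {n : Type*} [DecidableEq n]
    {A : Matrix n n ℂ} (hA : A.IsHermitian) (r t : ℝ) :
    ((r : ℂ) • A + (t : ℂ) • 1).IsHermitian := by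
  simp [IsHermitian, hA.eq]

section NormSq

variable {𝕜 n : Type*} [RCLike 𝕜] [Fintype n]

lemma star_dotProduct_self_eq_sum_norm_sq (v : n → 𝕜) :
    star v ⬝ᵥ v = ((∑ i, ‖v i‖ ^ 2 : ℝ) : 𝕜) := by
  simp only [dotProduct, Pi.star_apply, RCLike.star_def, RCLike.conj_mul]
  push_cast
  rfl

lemma star_mulVec_dotProduct_mulVec (M : Matrix n n 𝕜) (v : n → 𝕜) :
    star (M *ᵥ v) ⬝ᵥ (M *ᵥ v) = star v ⬝ᵥ (Mᴴ * M) *ᵥ v := by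
  rw [star_mulVec, ← dotProduct_mulVec, mulVec_mulVec]

lemma sum_sum_norm_sq_mulVec_eq_re {κ : Type*} [Fintype κ] (M : κ → Matrix n n 𝕜)
    (v : n → 𝕜) :
    ∑ j, ∑ i, ‖(M j *ᵥ v) i‖ ^ 2 = RCLike.re (star v ⬝ᵥ (∑ j, (M j)ᴴ * M j) *ᵥ v) := by
  simp only [sum_mulVec, dotProduct_sum, ← star_mulVec_dotProduct_mulVec,
    star_dotProduct_self_eq_sum_norm_sq, map_sum, RCLike.ofReal_re]

end NormSq

section OrthogonalDecomposition

variable {𝕜 n ι : Type*} [RCLike 𝕜] [Fintype n] [DecidableEq n] [Fintype ι]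
  {P : ι → Matrix n n 𝕜}

lemma star_dotProduct_mulVec_eq_sum_of_mul_proj (hsum : ∑ a, P a = 1)
    (hherm : ∀ a, (P a)ᴴ = P a) (hidem : ∀ a, P a * P a = P a)
    {H : Matrix n n 𝕜} {c : ι → ℝ} (hH : ∀ a, H * P a = (c a : 𝕜) • P a) (v : n → 𝕜) :
    star v ⬝ᵥ H *ᵥ v = ((∑ a, c a * ∑ i, ‖(P a *ᵥ v) i‖ ^ 2 : ℝ) : 𝕜) := by
  have hproj a : star v ⬝ᵥ P a *ᵥ v = ((∑ i, ‖(P a *ᵥ v) i‖ ^ 2 : ℝ) : 𝕜) := by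
    rw [← star_dotProduct_self_eq_sum_norm_sq, star_mulVec_dotProduct_mulVec, hherm, hidem]
  calc star v ⬝ᵥ H *ᵥ v = ∑ a, star v ⬝ᵥ (H * P a) *ᵥ v := by
        rw [← dotProduct_sum, ← sum_mulVec, ← Finset.mul_sum, hsum, mul_one]
    _ = _ := by
        simp only [hH, smul_mulVec, dotProduct_smul, hproj, smul_eq_mul]
        push_cast
        rfl

lemma sum_sum_norm_sq_proj (hsum : ∑ a, P a = 1)
    (hherm : ∀ a, (P a)ᴴ = P a) (hidem : ∀ a, P a * P a = P a) (v : n → 𝕜) :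
    ∑ a, ∑ i, ‖(P a *ᵥ v) i‖ ^ 2 = ∑ i, ‖v i‖ ^ 2 := by
  have h := star_dotProduct_mulVec_eq_sum_of_mul_proj hsum hherm hidem
    (H := 1) (c := fun _ => 1) (fun a => by simp) v
  rw [one_mulVec, star_dotProduct_self_eq_sum_norm_sq, RCLike.ofReal_inj] at h
  simpa using h.symm

lemma mul_sum_norm_sq_le_re_of_mul_proj (hsum : ∑ a, P a = 1)
    (hherm : ∀ a, (P a)ᴴ = P a) (hidem : ∀ a, P a * P a = P a)
    {H : Matrix n n 𝕜} {c : ι → ℝ} (hH : ∀ a, H * P a = (c a : 𝕜) • P a)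
    {b : ℝ} (hc : ∀ a, b ≤ c a) (v : n → 𝕜) :
    b * ∑ i, ‖v i‖ ^ 2 ≤ RCLike.re (star v ⬝ᵥ H *ᵥ v) := by
  rw [star_dotProduct_mulVec_eq_sum_of_mul_proj hsum hherm hidem hH, RCLike.ofReal_re,
    ← sum_sum_norm_sq_proj hsum hherm hidem, Finset.mul_sum]
  gcongr with a
  exact hc a

end OrthogonalDecomposition

theorem stmt_14_general (m : ℕ) (μ : ℝ)
    (ρ : Fin 3 → Matrix (Fin (m+1)) (Fin (m+1)) ℂ)
    (hskew : ∀ j, (ρ j).conjTranspose = -(ρ j))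
    (hcas : ∑ j, (Complex.I • ρ j) * (Complex.I • ρ j)
      = (((μ^2 + 2*μ : ℝ)) : ℂ) • (1 : Matrix (Fin (m+1)) (Fin (m+1)) ℂ))
    (t : Fin 3 → ℝ) (T : ℝ) (hT : T = Real.sqrt (∑ j, (t j)^2))
    (ι : Type) [Fintype ι] (w : ι → ℝ) (hw : ∀ a, |w a| ≤ μ)
    (pr : ι → Matrix (Fin (m+1)) (Fin (m+1)) ℂ)
    (hsum : ∑ a, pr a = 1)
    (hidem : ∀ a, pr a * pr a = pr a)
    (hherm : ∀ a, (pr a).conjTranspose = pr a)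
    (heig : ∀ a, (∑ j, (t j : ℂ) • (Complex.I • ρ j)) * pr a = (((T * w a : ℝ)) : ℂ) • pr a)
    (s : ℝ) (hs : 0 < s) (f : Fin (m+1) → ℂ) :
    (∀ a, (2/(μ+2)) * T^2
        ≤ (μ^2 + 2*μ - (w a)^2)/(4*s^2) + (w a/(2*s) - T)^2) ∧
    (2/(μ+2)) * T^2 * (∑ i, ‖f i‖ ^ 2)
      ≤ ∑ j, ∑ i, ‖(((1/(2*s) : ℝ) • (Complex.I • ρ j)
          + ((t j : ℂ)) • (1 : Matrix (Fin (m+1)) (Fin (m+1)) ℂ)).mulVec f) i‖ ^ 2 := by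
  have hT0 : 0 ≤ T := hT ▸ Real.sqrt_nonneg _
  have hT2 : T ^ 2 = ∑ j, t j ^ 2 := hT ▸ Real.sq_sqrt (by positivity)
  have hr : 0 ≤ 1 / (2 * s) := by positivity
  have hμ a : 0 ≤ μ := (abs_nonneg _).trans (hw a)
  refine ⟨fun a => ?_, ?_⟩
  · convert two_div_add_two_mul_sq_le (hμ a) (neg_le_neg (abs_le.mp (hw a)).2) hr hT0
      using 1
    field_simp
    ring
  · set r : ℝ := 1 / (2 * s)
    simp only [← Complex.coe_smul r]
    have hM j : ((r : ℂ) • (Complex.I • ρ j) + (t j : ℂ) • 1)ᴴ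
        = (r : ℂ) • (Complex.I • ρ j) + (t j : ℂ) • 1 :=
      ((isHermitian_I_smul_of_conjTranspose_eq_neg (hskew j)).ofReal_smul_add_ofReal_smul_one
        r (t j)).eq
    have hH a : (∑ j, ((r : ℂ) • (Complex.I • ρ j) + (t j : ℂ) • 1)
          * ((r : ℂ) • (Complex.I • ρ j) + (t j : ℂ) • 1)) * pr a
        = ((r ^ 2 * (μ ^ 2 + 2 * μ) + 2 * r * T * w a + T ^ 2 : ℝ) : ℂ) • pr a := by
      rw [sum_mul_self_mul_eq_smul_of_casimir _ _ hcas (heig a), hT2]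
      push_cast
      ring_nf
    rw [sum_sum_norm_sq_mulVec_eq_re]
    simp only [hM]
    exact mul_sum_norm_sq_le_re_of_mul_proj hsum hherm hidem hH
      (fun a => two_div_add_two_mul_sq_le (hμ a) (abs_le.mp (hw a)).1 hr hT0) f

/-- for all weights `w` of an `su(2)` irreducible representation of highest
weight `μ` (so `|w| ≤ μ`) and all `s > 0`, `|t| = T > 0`:
`(μ² + 2μ - w²)/(4s²) + (w/(2s) - T)² ≥ (2/(μ+2)) T²`, hence
`∑ⱼ |(iρⱼ/(2s) + tⱼ) f|² ≥ (2/(μ+2)) T² |f|²` for every `f`. -/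
theorem stmt_14 (m : ℕ) (μ : ℝ) (hμ : μ = (m : ℝ))
    (ρ : Fin 3 → Matrix (Fin (m+1)) (Fin (m+1)) ℂ)
    (hskew : ∀ j, (ρ j).conjTranspose = -(ρ j))
    (hcas : ∑ j, (Complex.I • ρ j) * (Complex.I • ρ j)
      = (((μ^2 + 2*μ : ℝ)) : ℂ) • (1 : Matrix (Fin (m+1)) (Fin (m+1)) ℂ))
    (t : Fin 3 → ℝ) (T : ℝ) (hT : T = Real.sqrt (∑ j, (t j)^2)) (hTpos : 0 < T)
    (ι : Type) [Fintype ι] (w : ι → ℝ) (hw : ∀ a, |w a| ≤ μ)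
    (pr : ι → Matrix (Fin (m+1)) (Fin (m+1)) ℂ)
    (hsum : ∑ a, pr a = 1)
    (hidem : ∀ a, pr a * pr a = pr a)
    (hherm : ∀ a, (pr a).conjTranspose = pr a)
    (horth : ∀ a b, a ≠ b → pr a * pr b = 0)
    (heig : ∀ a, (∑ j, (t j : ℂ) • (Complex.I • ρ j)) * pr a = (((T * w a : ℝ)) : ℂ) • pr a)
    (s : ℝ) (hs : 0 < s) (f : Fin (m+1) → ℂ) :
    (∀ a, (2/(μ+2)) * T^2
        ≤ (μ^2 + 2*μ - (w a)^2)/(4*s^2) + (w a/(2*s) - T)^2) ∧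
    (2/(μ+2)) * T^2 * (∑ i, ‖f i‖ ^ 2)
      ≤ ∑ j, ∑ i, ‖(((1/(2*s) : ℝ) • (Complex.I • ρ j)
          + ((t j : ℂ)) • (1 : Matrix (Fin (m+1)) (Fin (m+1)) ℂ)).mulVec f) i‖ ^ 2 :=
  stmt_14_general m μ ρ hskew hcas t T hT ι w hw pr hsum hidem hherm heig s hs f
end
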